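/- Every finite subset A of the nonzero integers has a valid ordering in which all positive elements of A appear before all negative elements of A. -/

import Mathlib

/-!
Induct on `A`, with `T = ∑ A`; the case `A = {T}` is trivial. Otherwise, if `T > 0` put first a
positive element `x ≠ T`, and if `T ≤ 0` put last a negative element `x ≠ T` (if there were no
such `x`, the elements of `A` other than `T` would all have the same sign and sum to `0` or `T`);
the rest, with nonzero sum `T - x`, is ordered by induction. For the partial sums to stay
distinct, the claim is strengthened: every partial sum is at least `min T 1`, and is nonzero
unless `T = 0`. Prepending `x > 0` then shifts the old, nonzero, partial sums by `x`; appending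
`x < 0` adds the partial sum `T ≤ 0`, strictly below the old ones, which are `≥ min (T - x) 1`.
-/
/-- The partial sums a₁, a₁+a₂, ..., a₁+⋯+aₙ of the list are pairwise distinct. -/
def ValidOrdering {G : Type*} [AddCommGroup G] (l : List G) : Prop :=
  ((List.range l.length).map (fun i => (l.take (i + 1)).sum)).Nodup

/-- `l` is an ordering (an enumeration without repetition) of the finite set `A`. -/
def IsOrderingOf {G : Type*} [AddCommGroup G] (l : List G) (A : Finset G) : Prop :=
  l.Nodup ∧ ∀ a, a ∈ l ↔ a ∈ A

open Finset

section PartialSums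

variable {G : Type*} [AddMonoid G]

def partialSums (l : List G) : List G :=
  (List.range l.length).map fun i => (l.take (i + 1)).sum

@[simp]
theorem partialSums_nil : partialSums ([] : List G) = [] := rfl

theorem partialSums_cons (x : G) (l : List G) :
    partialSums (x :: l) = x :: (partialSums l).map (x + ·) := by
  simp [partialSums, List.range_succ_eq_map, List.map_map, Function.comp_def]

theorem partialSums_concat (l : List G) (x : G) :
    partialSums (l ++ [x]) = partialSums l ++ [l.sum + x] := by
  simp only [partialSums, List.length_append, List.length_singleton, List.range_succ,
    List.map_append, List.map_cons, List.map_nil]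
  congr 1
  · refine List.map_congr_left fun i hi => ?_
    rw [List.take_append_of_le_length (by simpa using List.mem_range.mp hi)]
  · rw [List.take_of_length_le (by simp), List.sum_append, List.sum_singleton]

end PartialSums

section IsOrderingOf

variable {G : Type*} [AddCommGroup G] {l l' : List G} {A : Finset G}

theorem IsOrderingOf.perm (h : IsOrderingOf l A) (hl : l.Perm l') : IsOrderingOf l' A :=
  ⟨hl.nodup_iff.mp h.1, fun a => hl.mem_iff.symm.trans (h.2 a)⟩

theorem IsOrderingOf.sum_eq [DecidableEq G] (h : IsOrderingOf l A) : l.sum = ∑ a ∈ A, a := by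
  have hA : l.toFinset = A := Finset.ext fun a => by simp [h.2 a]
  simpa [hA] using (List.sum_toFinset id h.1).symm

variable [DecidableEq G] {x : G}

theorem IsOrderingOf.cons (h : IsOrderingOf l (A.erase x)) (hx : x ∈ A) :
    IsOrderingOf (x :: l) A := by
  refine ⟨List.nodup_cons.mpr ⟨fun hxl => by simpa using (h.2 x).mp hxl, h.1⟩, fun a => ?_⟩
  rw [List.mem_cons, h.2, mem_erase]
  by_cases hax : a = x <;> simp [hax, hx]

theorem IsOrderingOf.concat (h : IsOrderingOf l (A.erase x)) (hx : x ∈ A) :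
    IsOrderingOf (l ++ [x]) A :=
  (h.cons hx).perm (List.perm_append_singleton x l).symm

end IsOrderingOf

structure PosFirstValid (l : List ℤ) : Prop where
  pairwise_pos : l.Pairwise fun a b => 0 < b → 0 < a
  nodup : (partialSums l).Nodup
  min_sum_one_le : ∀ s ∈ partialSums l, min l.sum 1 ≤ s
  sum_eq_zero : 0 ∈ partialSums l → l.sum = 0

namespace PosFirstValid

theorem nil : PosFirstValid [] := ⟨.nil, .nil, by simp, by simp⟩

theorem singleton (a : ℤ) : PosFirstValid [a] where
  pairwise_pos := List.pairwise_singleton _ a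
  nodup := by simp [partialSums]
  min_sum_one_le := by simp [partialSums]
  sum_eq_zero := by simp [partialSums, eq_comm]

variable {l : List ℤ} {x : ℤ}

theorem zero_notMem (h : PosFirstValid l) (hl : l.sum ≠ 0) : 0 ∉ partialSums l :=
  fun h0 => hl (h.sum_eq_zero h0)

theorem cons (h : PosFirstValid l) (hl : l.sum ≠ 0) (hx : 0 < x) (hT : 0 < x + l.sum) :
    PosFirstValid (x :: l) where
  pairwise_pos := List.pairwise_cons.mpr ⟨fun _ _ _ => hx, h.pairwise_pos⟩
  nodup := by
    rw [partialSums_cons, List.nodup_cons]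
    refine ⟨fun hmem => ?_, h.nodup.map (add_right_injective x)⟩
    obtain ⟨s, hs, hxs⟩ := List.mem_map.mp hmem
    have hs0 : s = 0 := by omega
    exact h.zero_notMem hl (hs0 ▸ hs)
  min_sum_one_le := by
    simp only [partialSums_cons, List.mem_cons, List.mem_map, List.sum_cons]
    rintro _ (rfl | ⟨s, hs, rfl⟩)
    · omega
    · have := h.min_sum_one_le s hs; omega
  sum_eq_zero := by
    simp only [partialSums_cons, List.mem_cons, List.mem_map]
    rintro (h0 | ⟨s, hs, hs0⟩)
    · omega
    · have := h.min_sum_one_le s hs; omega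

theorem concat (h : PosFirstValid l) (hl : l.sum ≠ 0) (hx : x < 0) (hT : l.sum + x ≤ 0) :
    PosFirstValid (l ++ [x]) where
  pairwise_pos := List.pairwise_append.mpr ⟨h.pairwise_pos, List.pairwise_singleton _ x,
    fun _ _ b hb hb0 => by rw [List.mem_singleton] at hb; omega⟩
  nodup := by
    rw [partialSums_concat, List.nodup_append]
    refine ⟨h.nodup, List.nodup_singleton _, fun s hs b hb hsb => ?_⟩
    have := h.min_sum_one_le s hs
    rw [List.mem_singleton] at hb
    omega
  min_sum_one_le := by
    simp only [partialSums_concat, List.mem_append, List.mem_singleton, List.sum_append,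
      List.sum_singleton]
    rintro s (hs | rfl)
    · have := h.min_sum_one_le s hs; omega
    · omega
  sum_eq_zero := by
    simp only [partialSums_concat, List.mem_append, List.mem_singleton, List.sum_append,
      List.sum_singleton]
    rintro (h0 | h0)
    · exact absurd h0 (h.zero_notMem hl)
    · omega

end PosFirstValid

theorem exists_pos_mem_ne_sum {A : Finset ℤ} (hA : 0 ∉ A) (hT : 0 < ∑ a ∈ A, a)
    (hA1 : A ≠ {∑ a ∈ A, a}) : ∃ x ∈ A, 0 < x ∧ x ≠ ∑ a ∈ A, a := by
  set T := ∑ a ∈ A, a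
  by_contra! h
  have hneg : ∀ x ∈ A.erase T, x < 0 := fun x hx => by
    obtain ⟨hxT, hxA⟩ := mem_erase.mp hx
    have : x ≠ 0 := fun h0 => hA (h0 ▸ hxA)
    have := mt (h x hxA) hxT
    omega
  have hTA : T ∈ A := by
    by_contra hTA
    have := sum_nonpos fun x hx => (hneg x hx).le
    rw [erase_eq_of_notMem hTA] at this
    omega
  have herase : A.erase T = ∅ := by
    by_contra herase
    have := sum_neg hneg (nonempty_iff_ne_empty.mpr herase)
    rw [sum_erase_eq_sub hTA] at this
    omega
  exact hA1 (((erase_eq_empty_iff A T).mp herase).resolve_left (ne_empty_of_mem hTA))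

theorem exists_neg_mem_ne_sum {A : Finset ℤ} (hA : 0 ∉ A) (hne : A.Nonempty)
    (hT : ∑ a ∈ A, a ≤ 0) (hA1 : A ≠ {∑ a ∈ A, a}) :
    ∃ x ∈ A, x < 0 ∧ x ≠ ∑ a ∈ A, a := by
  set T := ∑ a ∈ A, a
  by_contra! h
  have hpos : ∀ x ∈ A.erase T, 0 < x := fun x hx => by
    obtain ⟨hxT, hxA⟩ := mem_erase.mp hx
    have : x ≠ 0 := fun h0 => hA (h0 ▸ hxA)
    have := mt (h x hxA) hxT
    omega
  have hTA : T ∈ A := by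
    by_contra hTA
    rw [erase_eq_of_notMem hTA] at hpos
    have := sum_pos hpos hne
    omega
  have herase : A.erase T = ∅ := by
    by_contra herase
    have := sum_pos hpos (nonempty_iff_ne_empty.mpr herase)
    rw [sum_erase_eq_sub hTA] at this
    omega
  exact hA1 (((erase_eq_empty_iff A T).mp herase).resolve_left (ne_empty_of_mem hTA))

theorem exists_isOrderingOf_posFirstValid (A : Finset ℤ) (hA : 0 ∉ A) :
    ∃ l, IsOrderingOf l A ∧ PosFirstValid l := by
  induction A using Finset.strongInduction with
  | H A ih =>
  set T := ∑ a ∈ A, a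
  obtain rfl | hne := A.eq_empty_or_nonempty
  · exact ⟨[], ⟨List.nodup_nil, by simp⟩, .nil⟩
  by_cases hA1 : A = {T}
  · exact ⟨[T], ⟨List.nodup_singleton T, by simp [hA1]⟩, .singleton T⟩
  have rest (x) (hxA : x ∈ A) :
      ∃ l, IsOrderingOf l (A.erase x) ∧ PosFirstValid l ∧ l.sum = T - x := by
    obtain ⟨l, hl, hv⟩ := ih (A.erase x) (erase_ssubset hxA) fun h => hA (mem_of_mem_erase h)
    exact ⟨l, hl, hv, hl.sum_eq.trans (sum_erase_eq_sub hxA)⟩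
  rcases lt_or_ge 0 T with hT | hT
  · obtain ⟨x, hxA, hx, hxT⟩ := exists_pos_mem_ne_sum hA hT hA1
    obtain ⟨l, hl, hv, hsum⟩ := rest x hxA
    exact ⟨x :: l, hl.cons hxA, hv.cons (by omega) hx (by omega)⟩
  · obtain ⟨x, hxA, hx, hxT⟩ := exists_neg_mem_ne_sum hA hne hT hA1
    obtain ⟨l, hl, hv, hsum⟩ := rest x hxA
    exact ⟨l ++ [x], hl.concat hxA, hv.concat (by omega) hx (by omega)⟩

theorem graham_integers_pos_before_neg (A : Finset ℤ) (hA : (0 : ℤ) ∉ A) :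
    ∃ l : List ℤ, IsOrderingOf l A ∧ ValidOrdering l ∧
      ∀ (i j : Fin l.length), (i : ℕ) < j → 0 < l.get j → 0 < l.get i := by
  obtain ⟨l, hl, hv⟩ := exists_isOrderingOf_posFirstValid A hA
  exact ⟨l, hl, hv.nodup, List.pairwise_iff_get.mp hv.pairwise_pos⟩
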